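/- Let (A,·,α) be a Hom-pre-Lie algebra and let L, R : A → gl(A) be defined by L_x y = x·y and R_x y = y·x. Define L⋆, R⋆ : A → gl(A*) by ⟨L⋆(x)(ξ), u⟩ = −⟨ξ, α^{-2}(α(x)·u)⟩ and ⟨R⋆(x)(ξ), u⟩ = −⟨ξ, α^{-2}(u·α(x))⟩ for x,u ∈ A, ξ ∈ A*. Then (A*, (α^{-1})*, L⋆ − R⋆, −R⋆) is a representation of the Hom-pre-Lie algebra (A,·,α), where (α^{-1})* denotes the transpose of α^{-1}. -/

import Mathlib

/-!
If `(ρ, μ)` represents a Hom-pre-Lie algebra on `V` with respect to an invertible `β`, then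
`ρ - μ` represents the sub-adjacent Hom-Lie algebra, and the twisted transpose `ρ ↦ ρ⋆` turns
`(ρ, μ)` into the representation `((ρ - μ)⋆, -μ⋆)` on `V*` with respect to `(β⁻¹)*`; the theorem is
the case of the regular representation `(L, R)`, which is a representation by the Hom-pre-Lie
identity. Pushing every `β⁻¹` to the left through the equivariance `β⁻¹ ∘ ρ (α x) = ρ x ∘ β⁻¹`,
each composite of twisted transposes becomes the transpose of `β⁻⁴ ∘ X` (`dualTwist β X`), where
`X` is built from `ρ, μ, β` at `α²`-shifted arguments; each axiom for the dual pair is then the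
transpose of the same axiom for `(ρ, μ)`.
-/

/-- A Hom-pre-Lie algebra structure on `A`: a bilinear product and an algebra
morphism `α` satisfying the Hom-pre-Lie identity. -/
def IsHomPreLie {K A : Type*} [Field K] [AddCommGroup A] [Module K A]
    (mul : A →ₗ[K] A →ₗ[K] A) (α : A →ₗ[K] A) : Prop :=
  (∀ x y, α (mul x y) = mul (α x) (α y)) ∧
  (∀ x y z, mul (mul x y) (α z) - mul (α x) (mul y z)
      = mul (mul y x) (α z) - mul (α y) (mul x z))

/-- A representation of a Hom-Lie algebra `(L, bracket, α)` on `V` with respect to `β`. -/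
def IsHomLieRep {K L V : Type*} [Field K] [AddCommGroup L] [Module K L]
    [AddCommGroup V] [Module K V]
    (bracket : L →ₗ[K] L →ₗ[K] L) (α : L →ₗ[K] L)
    (β : V →ₗ[K] V) (ρ : L →ₗ[K] Module.End K V) : Prop :=
  (∀ x, ρ (α x) ∘ₗ β = β ∘ₗ ρ x) ∧
  (∀ x y, ρ (bracket x y) ∘ₗ β = ρ (α x) ∘ₗ ρ y - ρ (α y) ∘ₗ ρ x)

/-- A representation `(V, β, ρ, μ)` of a Hom-pre-Lie algebra `(A, mul, α)`:
`ρ` is a representation of the sub-adjacent Hom-Lie algebra (whose bracket is the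
commutator `mul - mul.flip`) with respect to `β`, together with the two compatibility
conditions for `μ`. -/
def IsHomPreLieRep {K A V : Type*} [Field K] [AddCommGroup A] [Module K A]
    [AddCommGroup V] [Module K V]
    (mul : A →ₗ[K] A →ₗ[K] A) (α : A →ₗ[K] A)
    (β : V →ₗ[K] V) (ρ μ : A →ₗ[K] Module.End K V) : Prop :=
  IsHomLieRep (mul - mul.flip) α β ρ ∧
  (∀ x, β ∘ₗ μ x = μ (α x) ∘ₗ β) ∧
  (∀ x y, μ (α y) ∘ₗ μ x - μ (mul x y) ∘ₗ β = μ (α y) ∘ₗ ρ x - ρ (α x) ∘ₗ μ y)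

/-- The twisted dual map `ρ⋆ : A → gl(V*)`, defined by
`⟨ρ⋆(x)(ξ), u⟩ = −⟨ξ, β⁻²(ρ(α(x))(u))⟩`. -/
noncomputable def starRep {K A V : Type*} [Field K] [AddCommGroup A] [Module K A]
    [AddCommGroup V] [Module K V]
    (α : A →ₗ[K] A) (β : V ≃ₗ[K] V) (ρ : A →ₗ[K] Module.End K V) :
    A →ₗ[K] Module.End K (V →ₗ[K] K) where
  toFun x := - (((β.symm.toLinearMap ∘ₗ β.symm.toLinearMap) ∘ₗ ρ (α x)).dualMap :
      Module.End K (Module.Dual K V))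
  map_add' x y := by
    ext ξ u
    simp [LinearMap.dualMap_apply]
    abel
  map_smul' c x := by
    ext ξ u
    simp [LinearMap.dualMap_apply]

/-- Helper instance (port): current Lean's unifier no longer finds `LinearMap.addCommGroup`
for this type by itself; this supplies exactly that instance. -/
noncomputable instance instAddCommGroupStarRepCodomain {K A : Type*} [Field K] [AddCommGroup A]
    [Module K A] : AddCommGroup (A →ₗ[K] Module.End K (A →ₗ[K] K)) :=
  @LinearMap.addCommGroup K K A (Module.End K (A →ₗ[K] K)) _ _ _ LinearMap.addCommGroup _ _ _

section DualRepresentation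

variable {K A V : Type*} [Field K] [AddCommGroup A] [Module K A] [AddCommGroup V] [Module K V]
  {α : A →ₗ[K] A} {β : V ≃ₗ[K] V}

theorem apply_symm_eq_symm_apply_of_comp_eq {ρ : A →ₗ[K] Module.End K V}
    (hρ : ∀ x, ρ (α x) ∘ₗ β = β ∘ₗ ρ x) (x : A) (v : V) :
    ρ x (β.symm v) = β.symm (ρ (α x) v) := by
  apply β.injective
  simpa using (LinearMap.congr_fun (hρ x) (β.symm v)).symm

variable (β) in
noncomputable def dualTwist : Module.End K V →ₗ[K] Module.End K (Module.Dual K V) :=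
  Module.Dual.transpose ∘ₗ LinearMap.llcomp K V V V (β.symm ^ 4 : V ≃ₗ[K] V).toLinearMap

@[simp]
theorem dualTwist_apply (f : Module.End K V) (ξ : Module.Dual K V) (v : V) :
    dualTwist β f ξ v = ξ (β.symm (β.symm (β.symm (β.symm (f v))))) := by
  simp [dualTwist, pow_succ, Module.Dual.transpose_apply]

theorem starRep_apply_apply (ρ : A →ₗ[K] Module.End K V) (x : A) (ξ : Module.Dual K V)
    (v : V) : starRep α β ρ x ξ v = -ξ (β.symm (β.symm (ρ (α x) v))) := rfl

theorem starRep_comp_starRep {ρ μ : A →ₗ[K] Module.End K V}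
    (hμ : ∀ x, μ (α x) ∘ₗ β = β ∘ₗ μ x) (x y : A) :
    starRep α β ρ (α x) ∘ₗ starRep α β μ y = dualTwist β (μ (α (α (α y))) ∘ₗ ρ (α (α x))) := by
  ext ξ v
  simp [starRep_apply_apply, apply_symm_eq_symm_apply_of_comp_eq hμ]

theorem starRep_comp_dualMap {ρ : A →ₗ[K] Module.End K V}
    (hρ : ∀ x, ρ (α x) ∘ₗ β = β ∘ₗ ρ x) (x : A) :
    starRep α β ρ x ∘ₗ β.symm.toLinearMap.dualMap = -dualTwist β (ρ (α (α x)) ∘ₗ β) := by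
  rw [hρ]
  ext ξ v
  simp [starRep_apply_apply, LinearMap.dualMap_apply]

theorem starRep_map_comp_dualMap {ρ : A →ₗ[K] Module.End K V}
    (hρ : ∀ x, ρ (α x) ∘ₗ β = β ∘ₗ ρ x) (x : A) :
    starRep α β ρ (α x) ∘ₗ β.symm.toLinearMap.dualMap =
      β.symm.toLinearMap.dualMap ∘ₗ starRep α β ρ x := by
  ext ξ v
  simp [starRep_apply_apply, LinearMap.dualMap_apply, apply_symm_eq_symm_apply_of_comp_eq hρ]

theorem IsHomLieRep.starRep {bracket : A →ₗ[K] A →ₗ[K] A} {ρ : A →ₗ[K] Module.End K V}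
    (hα : ∀ x y, α (bracket x y) = bracket (α x) (α y)) (hρ : IsHomLieRep bracket α β ρ) :
    IsHomLieRep bracket α β.symm.toLinearMap.dualMap (starRep α β ρ) := by
  refine ⟨starRep_map_comp_dualMap hρ.1, fun x y => ?_⟩
  rw [starRep_comp_dualMap hρ.1, starRep_comp_starRep hρ.1, starRep_comp_starRep hρ.1, hα, hα,
    hρ.2, map_sub, neg_sub]

theorem IsHomPreLieRep.isHomLieRep_sub {mul : A →ₗ[K] A →ₗ[K] A} {ρ μ : A →ₗ[K] Module.End K V}
    (h : IsHomPreLieRep mul α β ρ μ) : IsHomLieRep (mul - mul.flip) α β (ρ - μ) := by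
  obtain ⟨⟨hρ, hρ_bracket⟩, hμ, hμρ⟩ := h
  refine ⟨fun x => ?_, fun x y => ?_⟩
  · simp only [LinearMap.sub_apply, LinearMap.sub_comp, LinearMap.comp_sub, hρ, hμ]
  · have hxy := hμρ x y
    have hyx := hμρ y x
    simp only [LinearMap.sub_apply, LinearMap.flip_apply, LinearMap.sub_comp, LinearMap.comp_sub,
      map_sub] at hρ_bracket hxy hyx ⊢
    linear_combination (norm := abel) hρ_bracket x y + hxy - hyx

theorem IsHomPreLieRep.dual {mul : A →ₗ[K] A →ₗ[K] A} {ρ μ : A →ₗ[K] Module.End K V}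
    (hα : ∀ x y, α (mul x y) = mul (α x) (α y)) (h : IsHomPreLieRep mul α β ρ μ) :
    IsHomPreLieRep mul α β.symm.toLinearMap.dualMap (starRep α β (ρ - μ)) (starRep α β (-μ)) := by
  have hσ := h.isHomLieRep_sub
  have hμ : ∀ x, (-μ) (α x) ∘ₗ β = β ∘ₗ (-μ) x := fun x => by
    simp only [LinearMap.neg_apply, LinearMap.neg_comp, LinearMap.comp_neg, h.2.1]
  refine ⟨hσ.starRep fun x y => ?_, fun x => (starRep_map_comp_dualMap hμ x).symm, fun x y => ?_⟩
  · simp only [LinearMap.sub_apply, LinearMap.flip_apply, map_sub, hα]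
  · rw [starRep_comp_starRep hμ, starRep_comp_dualMap hμ, starRep_comp_starRep hσ.1,
      starRep_comp_starRep hμ, hα, hα]
    have key := congrArg (dualTwist β) (h.2.2 (α (α x)) (α (α y)))
    simp only [LinearMap.neg_apply, LinearMap.sub_apply, LinearMap.neg_comp, LinearMap.comp_neg,
      LinearMap.sub_comp, LinearMap.comp_sub, map_neg, map_sub] at key ⊢
    rw [← sub_eq_zero, ← sub_eq_zero.mpr key]
    abel

end DualRepresentation

theorem IsHomPreLie.isHomPreLieRep_self {K A : Type*} [Field K] [AddCommGroup A] [Module K A]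
    {mul : A →ₗ[K] A →ₗ[K] A} {α : A →ₗ[K] A} (h : IsHomPreLie mul α) :
    IsHomPreLieRep mul α α mul mul.flip := by
  obtain ⟨hα, hpre⟩ := h
  refine ⟨⟨fun x => ?_, fun x y => ?_⟩, fun x => ?_, fun x y => ?_⟩ <;> ext u
  · simp [hα]
  · simpa [sub_eq_sub_iff_sub_eq_sub] using hpre x y u
  · simp [hα]
  · simpa using hpre u x y

theorem starRep_sub {K A : Type*} [Field K] [AddCommGroup A] [Module K A] (α : A →ₗ[K] A)
    (β : A ≃ₗ[K] A) (ρ μ : A →ₗ[K] Module.End K A) :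
    starRep α β (ρ - μ) = starRep α β ρ - starRep α β μ := by
  ext x ξ u
  -- `LinearMap.sub_apply` does not fire through `instAddCommGroupStarRepCodomain`.
  change _ = starRep α β ρ x ξ u - starRep α β μ x ξ u
  simp only [starRep_apply_apply, LinearMap.sub_apply, map_sub]
  ring

theorem starRep_neg {K A : Type*} [Field K] [AddCommGroup A] [Module K A] (α : A →ₗ[K] A)
    (β : A ≃ₗ[K] A) (μ : A →ₗ[K] Module.End K A) :
    starRep α β (-μ) = -starRep α β μ := by
  ext x ξ u
  change _ = -starRep α β μ x ξ u
  simp [starRep_apply_apply]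

/-- Let `(A,·,α)` be a Hom-pre-Lie algebra, `L_x y = x·y`,
`R_x y = y·x`, and let `L⋆, R⋆ : A → gl(A*)` be defined by
`⟨L⋆(x)(ξ), u⟩ = −⟨ξ, α⁻²(α(x)·u)⟩` and `⟨R⋆(x)(ξ), u⟩ = −⟨ξ, α⁻²(u·α(x))⟩`.
Then `(A*, (α⁻¹)*, L⋆ − R⋆, −R⋆)` is a representation of `(A,·,α)`.
(Here `L = mul` and `R = mul.flip`.) -/
theorem dual_regular_rep_isHomPreLieRep
    {K A : Type*} [Field K] [AddCommGroup A] [Module K A]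
    (mul : A →ₗ[K] A →ₗ[K] A) (α : A ≃ₗ[K] A)
    (hA : IsHomPreLie mul (α : A →ₗ[K] A)) :
    IsHomPreLieRep mul (α : A →ₗ[K] A)
      (α.symm.toLinearMap.dualMap)
      (starRep (α : A →ₗ[K] A) α mul - starRep (α : A →ₗ[K] A) α mul.flip)
      (- starRep (α : A →ₗ[K] A) α mul.flip) := by
  rw [← starRep_sub, ← starRep_neg]
  exact hA.isHomPreLieRep_self.dual hA.1
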